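/- arXiv:1407.2208 — 3 statements merged into one kernel-verified Lean document; each statement's English description precedes it below -/
import Mathlib

section
/- Let C be a linear code of length n over Z_{p^s} with minimum extended Lee weight d. Then ⌊(d-1)/p^{s-1}⌋ ≤ n - rank(C), where rank(C) is the minimal number of generators of C as a Z_{p^s}-module. -/
/-- The extended Lee weight on `ZMod (p^s)`. -/
def leeWt (p s : ℕ) (x : ZMod (p ^ s)) : ℕ :=
  if x.val ≤ p ^ s - p ^ (s - 1) then min x.val (p ^ (s - 1)) else p ^ s - x.val

/-- The extended Lee weight of a vector, extended coordinatewise. -/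
def leeWtV (p s n : ℕ) (x : Fin n → ZMod (p ^ s)) : ℕ :=
  ∑ i, leeWt p s (x i)

/-! Each coordinate contributes at most `p ^ (s - 1)` to the extended Lee weight, so every
nonzero codeword has Hamming weight greater than `k = ⌊(d - 1) / p ^ (s - 1)⌋`. Hence deleting any
`k` coordinates is injective on `C`, and generators of the punctured code lift to generators of
`C`. Over the principal ideal ring `ZMod (p ^ s)` every submodule of `R ^ m` is generated by `m`
elements, by induction on `m`: the first coordinates of a submodule `L ≤ R × M` form a principal
ideal `(a)`, and one element of `L` over `a` together with generators of `L ∩ (0 × M)` span `L`.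
So `r ≤ n - k`. -/

open Submodule

section Generators

variable {R M N : Type*} [CommRing R] [AddCommGroup M] [Module R M] [AddCommGroup N] [Module R N]

def Module.SubmodulesSpannedByAtMost (R M : Type*) [Semiring R] [AddCommMonoid M] [Module R M]
    (m : ℕ) : Prop :=
  ∀ N : Submodule R M, ∃ S : Finset M, S.card ≤ m ∧ span R (S : Set M) = N

namespace Module.SubmodulesSpannedByAtMost

variable {m : ℕ}

theorem of_subsingleton [Subsingleton M] : SubmodulesSpannedByAtMost R M 0 := fun N =>
  ⟨∅, le_rfl, by rw [Subsingleton.elim N ⊥]; simp⟩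

theorem of_linearEquiv (e : M ≃ₗ[R] N) (h : SubmodulesSpannedByAtMost R M m) :
    SubmodulesSpannedByAtMost R N m := by
  classical
  intro L
  obtain ⟨S, hS, hSL⟩ := h (L.comap (e : M →ₗ[R] N))
  refine ⟨S.image e, Finset.card_image_le.trans hS, ?_⟩
  rw [Finset.coe_image, ← LinearEquiv.coe_toLinearMap, span_image, hSL, map_comap_eq,
    LinearEquiv.range, top_inf_eq]

theorem prod [IsPrincipalIdealRing R] (h : SubmodulesSpannedByAtMost R M m) :
    SubmodulesSpannedByAtMost R (R × M) (m + 1) := by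
  classical
  intro L
  obtain ⟨a, ha⟩ := (IsPrincipalIdealRing.principal (L.map (LinearMap.fst R R M))).principal
  obtain ⟨g, hgL, rfl⟩ : a ∈ L.map (LinearMap.fst R R M) := ha ▸ mem_span_singleton_self a
  obtain ⟨S, hS, hSL⟩ := h (L.comap (LinearMap.inr R R M))
  refine ⟨insert g (S.image (LinearMap.inr R R M)),
    (Finset.card_insert_le _ _).trans (by grw [Finset.card_image_le, hS]), le_antisymm ?_ ?_⟩
  · rw [span_le, Finset.coe_insert, Set.insert_subset_iff, Finset.coe_image,
      Set.image_subset_iff]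
    exact ⟨hgL, fun y hy => (hSL ▸ subset_span hy : y ∈ L.comap _)⟩
  · intro x hx
    obtain ⟨c, hc⟩ := mem_span_singleton.1 (ha ▸ mem_map_of_mem hx : x.1 ∈ span R {g.1})
    rw [Finset.coe_insert, mem_span_insert, Finset.coe_image, span_image, hSL]
    have hinr : LinearMap.inr R R M (x - c • g).2 = x - c • g := by
      ext
      · simp [← hc]
      · rfl
    refine ⟨c, x - c • g, ⟨(x - c • g).2, ?_, hinr⟩, by abel⟩
    rw [SetLike.mem_coe, mem_comap, hinr]
    exact L.sub_mem hx (L.smul_mem c hgL)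

end Module.SubmodulesSpannedByAtMost

open Module

theorem Module.submodulesSpannedByAtMost_fin_pi [IsPrincipalIdealRing R] (m : ℕ) :
    SubmodulesSpannedByAtMost R (Fin m → R) m := by
  induction m with
  | zero => exact .of_subsingleton
  | succ m ih => exact ih.prod.of_linearEquiv (Fin.consLinearEquiv R fun _ => R)

theorem Module.submodulesSpannedByAtMost_pi [IsPrincipalIdealRing R] (ι : Type*) [Fintype ι] :
    SubmodulesSpannedByAtMost R (ι → R) (Fintype.card ι) :=
  (submodulesSpannedByAtMost_fin_pi _).of_linearEquiv
    (LinearEquiv.funCongrLeft R R (Fintype.equivFin ι))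

theorem Submodule.exists_finset_card_le_span_eq_of_disjoint_ker {f : M →ₗ[R] N}
    {C : Submodule R M} (hC : Disjoint C (LinearMap.ker f)) (S' : Finset N)
    (hS' : span R (S' : Set N) = C.map f) :
    ∃ S : Finset M, S.card ≤ S'.card ∧ span R (S : Set M) = C := by
  classical
  have hlift : ∀ y ∈ S', ∃ x ∈ C, f x = y := fun y hy => (hS' ▸ subset_span hy : y ∈ C.map f)
  choose! g hgC hfg using hlift
  have hle : span R (S'.image g : Set M) ≤ C := by
    rw [span_le, Finset.coe_image, Set.image_subset_iff]
    exact hgC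
  have hmap : (span R (S'.image g : Set M)).map f = C.map f := by
    rw [map_span, Finset.coe_image, ← Set.image_comp, ← hS',
      Set.EqOn.image_eq_self (f := f ∘ g) hfg]
  have hCle : C ≤ span R (S'.image g : Set M) ⊔ LinearMap.ker f := by
    rw [← comap_map_eq, hmap]
    exact le_comap_map f C
  refine ⟨S'.image g, Finset.card_image_le, ?_⟩
  rw [← inf_eq_right.2 hCle, sup_inf_assoc_of_le _ hle, hC.symm.eq_bot, sup_bot_eq]

theorem disjoint_ker_funLeft_compl_of_card_lt_hammingNorm {ι : Type*} [Fintype ι]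
    [DecidableEq ι] [DecidableEq R] {C : Submodule R (ι → R)} (K : Finset ι)
    (hK : ∀ c ∈ C, c ≠ 0 → K.card < hammingNorm c) :
    Disjoint C (LinearMap.ker (LinearMap.funLeft R R ((↑) : ↥(Kᶜ) → ι))) := by
  rw [disjoint_def]
  intro c hc hker
  by_contra hc0
  refine (hK c hc hc0).not_ge (Finset.card_le_card fun i hi => ?_)
  by_contra hiK
  exact (Finset.mem_filter.1 hi).2
    (congr_fun (LinearMap.mem_ker.1 hker) ⟨i, Finset.mem_compl.2 hiK⟩)

theorem exists_span_eq_card_add_le_of_lt_hammingNorm [IsPrincipalIdealRing R] [DecidableEq R]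
    {ι : Type*} [Fintype ι] {C : Submodule R (ι → R)} {k : ℕ} (hk : k ≤ Fintype.card ι)
    (hC : ∀ c ∈ C, c ≠ 0 → k < hammingNorm c) :
    ∃ S : Finset (ι → R), S.card + k ≤ Fintype.card ι ∧ span R (S : Set (ι → R)) = C := by
  classical
  obtain ⟨K, -, rfl⟩ := Finset.exists_subset_card_eq (s := Finset.univ) (n := k) (by simpa)
  obtain ⟨S', hS', hS'C⟩ := submodulesSpannedByAtMost_pi (R := R) ↥(Kᶜ)
    (C.map (LinearMap.funLeft R R ((↑) : ↥(Kᶜ) → ι)))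
  obtain ⟨S, hS, hSC⟩ := exists_finset_card_le_span_eq_of_disjoint_ker
    (disjoint_ker_funLeft_compl_of_card_lt_hammingNorm K hC) S' hS'C
  rw [Fintype.card_coe, Finset.card_compl] at hS'
  exact ⟨S, by omega, hSC⟩

end Generators

theorem leeWt_le {p s : ℕ} (hp : 0 < p) (x : ZMod (p ^ s)) : leeWt p s x ≤ p ^ (s - 1) := by
  have : NeZero (p ^ s) := ⟨(pow_pos hp s).ne'⟩
  have := x.val_lt
  have := Nat.pow_le_pow_right hp (Nat.sub_le s 1)
  unfold leeWt
  split <;> omega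

theorem leeWt_zero (p s : ℕ) : leeWt p s 0 = 0 := by
  simp [leeWt]

theorem leeWtV_le_hammingNorm_mul {p s n : ℕ} (hp : 0 < p) (c : Fin n → ZMod (p ^ s)) :
    leeWtV p s n c ≤ hammingNorm c * p ^ (s - 1) := by
  rw [leeWtV, hammingNorm, ← Finset.sum_filter_of_ne (p := (c · ≠ 0))
    fun i _ h hi => h (by rw [hi, leeWt_zero])]
  exact Finset.sum_le_card_nsmul _ _ _ fun i _ => leeWt_le hp (c i)

theorem sub_one_div_lt_hammingNorm_of_le_leeWtV {p s n d : ℕ} (hp : 0 < p)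
    {c : Fin n → ZMod (p ^ s)} (hc : c ≠ 0) (hd : d ≤ leeWtV p s n c) :
    (d - 1) / p ^ (s - 1) < hammingNorm c := by
  have hpos := Nat.mul_pos (hammingNorm_pos_iff.2 hc) (pow_pos hp (s - 1))
  have := leeWtV_le_hammingNorm_mul hp c
  rw [Nat.div_lt_iff_lt_mul (pow_pos hp (s - 1))]
  omega

theorem lee_rank_bound_general (p s n d r : ℕ) (hp : p.Prime)
    (C : Submodule (ZMod (p ^ s)) (Fin n → ZMod (p ^ s)))
    (hrmin : ∀ S : Finset (Fin n → ZMod (p ^ s)),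
      Submodule.span (ZMod (p ^ s)) (S : Set (Fin n → ZMod (p ^ s))) = C → r ≤ S.card)
    (hex : ∃ c ∈ C, c ≠ 0 ∧ leeWtV p s n c = d)
    (hmin : ∀ c ∈ C, c ≠ 0 → d ≤ leeWtV p s n c) :
    (d - 1) / p ^ (s - 1) + r ≤ n := by
  have : IsPrincipalIdealRing (ZMod (p ^ s)) :=
    IsPrincipalIdealRing.of_surjective (Int.castRingHom _) ZMod.intCast_surjective
  have hC : ∀ c ∈ C, c ≠ 0 → (d - 1) / p ^ (s - 1) < hammingNorm c := fun c hc hc0 =>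
    sub_one_div_lt_hammingNorm_of_le_leeWtV hp.pos hc0 (hmin c hc hc0)
  obtain ⟨c, hc, hc0, -⟩ := hex
  obtain ⟨S, hS, hSC⟩ := exists_span_eq_card_add_le_of_lt_hammingNorm
    ((hC c hc hc0).le.trans hammingNorm_le_card_fintype) hC
  have := hrmin S hSC
  rw [Fintype.card_fin] at hS
  omega

/-- MDR-type Singleton bound: if `C` has minimum extended Lee weight `d` and
`rank(C) = r` is the minimal number of generators of `C` as a `ZMod (p^s)`-module,
then `⌊(d-1)/p^(s-1)⌋ ≤ n - rank(C)`. -/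
theorem lee_rank_bound (p s n d r : ℕ) (hp : p.Prime) (hs : 1 ≤ s)
    (C : Submodule (ZMod (p ^ s)) (Fin n → ZMod (p ^ s)))
    (hgen : ∃ S : Finset (Fin n → ZMod (p ^ s)),
      S.card = r ∧ Submodule.span (ZMod (p ^ s)) (S : Set (Fin n → ZMod (p ^ s))) = C)
    (hrmin : ∀ S : Finset (Fin n → ZMod (p ^ s)),
      Submodule.span (ZMod (p ^ s)) (S : Set (Fin n → ZMod (p ^ s))) = C → r ≤ S.card)
    (hex : ∃ c ∈ C, c ≠ 0 ∧ leeWtV p s n c = d)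
    (hmin : ∀ c ∈ C, c ≠ 0 → d ≤ leeWtV p s n c) :
    (d - 1) / p ^ (s - 1) + r ≤ n :=
  lee_rank_bound_general p s n d r hp C hrmin hex hmin
end

section
/- Let C be a linear code over Z_{p^s}. For every v ∈ C, the Gray image φ_L(p^{s-1}·v) lies in the kernel K(φ_L(C)) = {φ_L(u) : u ∈ C, φ_L(u) + φ_L(C) = φ_L(C)}. In particular, the Gray image of the subcode p^{s-1}·C is a linear subcode of K(φ_L(C)). -/
/-- The Gray map `φ_L : ZMod (p^s) → (F_p)^(p^(s-1))`:
`x = q·p^(s-1) + r` maps to the vector with `q+1` in the first `r` coordinates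
and `q` in the rest. -/
def gray (p s : ℕ) (x : ZMod (p ^ s)) : Fin (p ^ (s - 1)) → ZMod p :=
  fun i =>
    if i.val < x.val % p ^ (s - 1) then ((x.val / p ^ (s - 1) + 1 : ℕ) : ZMod p)
    else ((x.val / p ^ (s - 1) : ℕ) : ZMod p)

/-- The Gray map extended coordinatewise to vectors. -/
def grayV (p s n : ℕ) (v : Fin n → ZMod (p ^ s)) : Fin n → Fin (p ^ (s - 1)) → ZMod p :=
  fun i => gray p s (v i)

section Aux
variable {p s : ℕ}

lemma hps (hs : 1 ≤ s) : p ^ s = p ^ (s - 1) * p := by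
  obtain ⟨t, rfl⟩ : ∃ t, s = t + 1 := ⟨s - 1, by omega⟩
  simp [pow_succ]

lemma torsion_val (hp : p.Prime) (hs : 1 ≤ s) (t : ZMod (p ^ s)) :
    ((p : ZMod (p ^ s)) ^ (s - 1) * t).val = p ^ (s - 1) * (t.val % p) := by
  haveI : NeZero (p ^ s) := ⟨pow_ne_zero s hp.ne_zero⟩
  have h1 : (p : ZMod (p ^ s)) ^ (s - 1) = ((p ^ (s - 1) : ℕ) : ZMod (p ^ s)) := by push_cast; ring
  have hlt : p ^ (s - 1) < p ^ s := Nat.pow_lt_pow_right hp.one_lt (by omega)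
  rw [h1, ZMod.val_mul, ZMod.val_natCast, Nat.mod_eq_of_lt hlt]
  have h2 := Nat.mul_mod_mul_left (p ^ (s - 1)) t.val p
  rw [← hps hs] at h2
  exact h2

lemma key_mod {m P c a : ℕ} (hm : 0 < m) (hc : c < P) (ha : a < m * P) :
    (a + m * c) % (m * P) % m = a % m ∧
    (a + m * c) % (m * P) / m = (a / m + c) % P := by
  have hP : 0 < P := by omega
  set q := a / m with hq
  set r := a % m with hrdef
  have hr : r < m := Nat.mod_lt _ hm
  have ha' : a = m * q + r := (Nat.div_add_mod a m).symm
  have hqP : q < P := by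
    exact Nat.div_lt_of_lt_mul ha
  set d := (q + c) % P with hd
  set k := (q + c) / P with hk
  have h2 : q + c = P * k + d := (Nat.div_add_mod _ _).symm
  have hdP : d < P := Nat.mod_lt _ hP
  have h1 : a + m * c = m * P * k + (m * d + r) := by
    calc a + m * c = m * (q + c) + r := by rw [ha']; ring
    _ = m * (P * k + d) + r := by rw [h2]
    _ = m * P * k + (m * d + r) := by ring
  have hlt : m * d + r < m * P := by nlinarith
  have hmain : (a + m * c) % (m * P) = m * d + r := by
    rw [h1, Nat.mul_add_mod, Nat.mod_eq_of_lt hlt]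
  constructor
  · rw [hmain, Nat.mul_add_mod]
    exact Nat.mod_eq_of_lt hr
  · rw [hmain, Nat.mul_add_div hm, Nat.div_eq_of_lt hr]
    simp [hd, hq]

lemma gray_add_torsion (hp : p.Prime) (hs : 1 ≤ s) (x t : ZMod (p ^ s))
    (i : Fin (p ^ (s - 1))) :
    gray p s (x + (p : ZMod (p ^ s)) ^ (s - 1) * t) i
      = gray p s x i + gray p s ((p : ZMod (p ^ s)) ^ (s - 1) * t) i := by
  haveI : NeZero (p ^ s) := ⟨pow_ne_zero s hp.ne_zero⟩
  have hm : 0 < p ^ (s - 1) := pow_pos hp.pos _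
  have hc : t.val % p < p := Nat.mod_lt _ hp.pos
  have hx : x.val < p ^ (s - 1) * p := by rw [← hps hs]; exact ZMod.val_lt x
  have hval : (x + (p : ZMod (p ^ s)) ^ (s - 1) * t).val
      = (x.val + p ^ (s - 1) * (t.val % p)) % (p ^ (s - 1) * p) := by
    rw [ZMod.val_add, torsion_val hp hs, ← hps hs]
  obtain ⟨hmod, hdiv⟩ := key_mod hm hc hx
  simp only [gray, hval, torsion_val hp hs, hmod, hdiv, Nat.mul_mod_right,
    Nat.mul_div_cancel_left _ hm, Nat.not_lt_zero, if_false]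
  split_ifs with h
  · rw [Nat.cast_add, ZMod.natCast_mod]
    push_cast
    ring
  · rw [ZMod.natCast_mod]
    push_cast
    ring

lemma gray_torsion (hp : p.Prime) (hs : 1 ≤ s) (t : ZMod (p ^ s)) (i : Fin (p ^ (s - 1))) :
    gray p s ((p : ZMod (p ^ s)) ^ (s - 1) * t) i = ((t.val : ℕ) : ZMod p) := by
  have hm : 0 < p ^ (s - 1) := pow_pos hp.pos _
  simp [gray, torsion_val hp hs, Nat.mul_mod_right, Nat.mul_div_cancel_left _ hm,
    ZMod.natCast_mod]

variable {n : ℕ}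

lemma grayV_add_torsion (hp : p.Prime) (hs : 1 ≤ s) (u v : Fin n → ZMod (p ^ s)) :
    grayV p s n (u + (p : ZMod (p ^ s)) ^ (s - 1) • v)
      = grayV p s n u + grayV p s n ((p : ZMod (p ^ s)) ^ (s - 1) • v) := by
  funext i j
  simp only [grayV, Pi.add_apply, Pi.smul_apply, smul_eq_mul]
  exact gray_add_torsion hp hs (u i) (v i) j

lemma grayV_torsion (hp : p.Prime) (hs : 1 ≤ s) (v : Fin n → ZMod (p ^ s)) :
    grayV p s n ((p : ZMod (p ^ s)) ^ (s - 1) • v)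
      = fun i _ => (((v i).val : ℕ) : ZMod p) := by
  funext i j
  simp only [grayV, Pi.smul_apply, smul_eq_mul]
  exact gray_torsion hp hs (v i) j

end Aux

/-- For every `v ∈ C`, the Gray image `φ_L(p^(s-1)·v)` lies in the kernel
`K(φ_L(C)) = {φ_L(u) : u ∈ C, φ_L(u) + φ_L(C) = φ_L(C)}`; moreover the Gray image
of the subcode `p^(s-1)·C` is a linear subcode of `K(φ_L(C))`. -/
theorem grayV_torsion_mem_kernel (p s n : ℕ) (hp : p.Prime) (hs : 1 ≤ s)
    (C : Submodule (ZMod (p ^ s)) (Fin n → ZMod (p ^ s))) :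
    (∀ v ∈ C, grayV p s n ((p : ZMod (p ^ s)) ^ (s - 1) • v) ∈
      {y | ∃ u ∈ C, y = grayV p s n u ∧
        (fun z => grayV p s n u + z) '' (grayV p s n '' C) = grayV p s n '' C}) ∧
    ∃ W : Submodule (ZMod p) (Fin n → Fin (p ^ (s - 1)) → ZMod p),
      (W : Set (Fin n → Fin (p ^ (s - 1)) → ZMod p)) =
        grayV p s n '' ((fun v => (p : ZMod (p ^ s)) ^ (s - 1) • v) '' C) ∧
      (W : Set (Fin n → Fin (p ^ (s - 1)) → ZMod p)) ⊆
        {y | ∃ u ∈ C, y = grayV p s n u ∧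
          (fun z => grayV p s n u + z) '' (grayV p s n '' C) = grayV p s n '' C} := by
  haveI : NeZero (p ^ s) := ⟨pow_ne_zero s hp.ne_zero⟩
  have hker : ∀ v ∈ C, grayV p s n ((p : ZMod (p ^ s)) ^ (s - 1) • v) ∈
      {y | ∃ u ∈ C, y = grayV p s n u ∧
        (fun z => grayV p s n u + z) '' (grayV p s n '' C) = grayV p s n '' C} := by
    intro v hv
    have hw : (p : ZMod (p ^ s)) ^ (s - 1) • v ∈ C := C.smul_mem _ hv
    refine ⟨_, hw, rfl, ?_⟩
    ext y
    constructor
    · rintro ⟨-, ⟨u, hu, rfl⟩, rfl⟩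
      refine ⟨u + (p : ZMod (p ^ s)) ^ (s - 1) • v, C.add_mem hu hw, ?_⟩
      rw [grayV_add_torsion hp hs]
      exact add_comm _ _
    · rintro ⟨u, hu, rfl⟩
      refine ⟨grayV p s n (u - (p : ZMod (p ^ s)) ^ (s - 1) • v),
        ⟨_, C.sub_mem hu hw, rfl⟩, ?_⟩
      have h1 : u - (p : ZMod (p ^ s)) ^ (s - 1) • v + (p : ZMod (p ^ s)) ^ (s - 1) • v = u := by
        abel
      calc grayV p s n ((p : ZMod (p ^ s)) ^ (s - 1) • v)
            + grayV p s n (u - (p : ZMod (p ^ s)) ^ (s - 1) • v)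
          = grayV p s n (u - (p : ZMod (p ^ s)) ^ (s - 1) • v)
            + grayV p s n ((p : ZMod (p ^ s)) ^ (s - 1) • v) := add_comm _ _
        _ = grayV p s n (u - (p : ZMod (p ^ s)) ^ (s - 1) • v
            + (p : ZMod (p ^ s)) ^ (s - 1) • v) := (grayV_add_torsion hp hs _ _).symm
        _ = grayV p s n u := by rw [h1]
  refine ⟨hker, ?_⟩
  have hsne : s ≠ 0 := by omega
  refine ⟨{ carrier := grayV p s n '' ((fun v => (p : ZMod (p ^ s)) ^ (s - 1) • v) '' C),
            add_mem' := ?_, zero_mem' := ?_, smul_mem' := ?_ }, rfl, ?_⟩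
  · rintro a b ⟨-, ⟨v1, hv1, rfl⟩, rfl⟩ ⟨-, ⟨v2, hv2, rfl⟩, rfl⟩
    refine ⟨_, ⟨v1 + v2, C.add_mem hv1 hv2, rfl⟩, ?_⟩
    rw [grayV_torsion hp hs, grayV_torsion hp hs, grayV_torsion hp hs]
    funext i j
    simp only [Pi.add_apply, ZMod.natCast_val]
    exact ZMod.cast_add (dvd_pow_self p hsne) _ _
  · exact ⟨_, ⟨0, C.zero_mem, rfl⟩, by
      rw [grayV_torsion hp hs]
      funext i j
      simp⟩
  · rintro a x ⟨-, ⟨v, hv, rfl⟩, rfl⟩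
    refine ⟨_, ⟨((a.val : ℕ) : ZMod (p ^ s)) • v, C.smul_mem _ hv, rfl⟩, ?_⟩
    rw [grayV_torsion hp hs, grayV_torsion hp hs]
    funext i j
    simp only [Pi.smul_apply, smul_eq_mul, ZMod.natCast_val]
    rw [ZMod.cast_mul (dvd_pow_self p hsne), ZMod.cast_natCast (dvd_pow_self p hsne)]
    haveI : NeZero p := ⟨hp.ne_zero⟩
    show (a.val : ZMod p) * _ = a * _
    congr 1
    exact (ZMod.natCast_val a).trans (ZMod.cast_id p a)
  · rintro y ⟨-, ⟨v, hv, rfl⟩, rfl⟩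
    exact hker v hv
end

section
/- Let C be a linear code over Z_{p^s} and v ∈ C a codeword of (additive) order greater than p^2. Then φ_L(v) is not in the kernel K(φ_L(C)) of the Gray image: either φ_L(v) + φ_L(C) ≠ φ_L(C) or φ_L(-v) + φ_L(C) ≠ φ_L(C). -/
/-!
Write `x = q N + r` with `N = p ^ (s - 1)` and `0 ≤ r < N`. If `r ≠ 0` then
`-x = (p - 1 - q) N + (N - r)`, so `φ(-x) + φ(x)` has `i`-th coordinate
`-1 + [i < N - r] + [i < r]`. A Gray image `φ(y)` has the shape `c + [i < t]`: the last
coordinate forces `c = -1`, the first one `t = 0` and `2 = 0` in `𝔽_p`, and the coordinates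
`i = r`, `i = N - r` force `r = N - r`. So either `r = 0` or `p = 2` and `p r = N`; in both cases
`N ∣ p x`, hence `p² x = 0`, and a codeword of order `> p²` cannot have `φ(-v) + φ(C) = φ(C)`.
-/

section GrayMap

variable {p s : ℕ}

theorem gray_apply (x : ZMod (p ^ s)) (i : Fin (p ^ (s - 1))) :
    gray p s x i = ((x.val / p ^ (s - 1) : ℕ) : ZMod p) +
      if (i : ℕ) < x.val % p ^ (s - 1) then 1 else 0 := by
  unfold gray
  split_ifs <;> push_cast <;> ring

theorem val_div_pow_lt [NeZero p] (x : ZMod (p ^ s)) : x.val / p ^ (s - 1) < p := by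
  refine Nat.div_lt_of_lt_mul (x.val_lt.trans_le ?_)
  calc p ^ s ≤ p ^ (s - 1 + 1) := pow_le_pow_right₀ NeZero.one_le (by omega)
    _ = p ^ (s - 1) * p := pow_succ _ _

theorem val_neg_eq_of_mod_ne_zero [NeZero p] {x : ZMod (p ^ s)}
    (hr : x.val % p ^ (s - 1) ≠ 0) :
    (-x).val = (p ^ (s - 1) - x.val % p ^ (s - 1)) +
      (p - 1 - x.val / p ^ (s - 1)) * p ^ (s - 1) := by
  have hs : s ≠ 0 := by rintro rfl; simp [Nat.mod_one] at hr
  have hx : x ≠ 0 := by rintro rfl; simp at hr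
  have hq := val_div_pow_lt x
  set N := p ^ (s - 1)
  have hpN : p ^ s = p * N := by rw [← pow_succ']; congr 1; omega
  have hlt := x.val_lt
  have hrN : x.val % N < N := Nat.mod_lt _ (pow_pos (NeZero.pos p) _)
  have hdecomp := Nat.div_add_mod x.val N
  obtain ⟨k, hk⟩ : ∃ k, p - 1 - x.val / N = k := ⟨_, rfl⟩
  have hps : p * N = N * (x.val / N) + k * N + N := by
    conv_lhs => rw [show p = x.val / N + k + 1 by omega]
    ring
  rw [ZMod.neg_val, if_neg hx, hk]
  omega

theorem gray_neg_add_gray_apply [NeZero p] {x : ZMod (p ^ s)}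
    (hr : x.val % p ^ (s - 1) ≠ 0) (i : Fin (p ^ (s - 1))) :
    gray p s (-x) i + gray p s x i =
      -1 + (if (i : ℕ) < p ^ (s - 1) - x.val % p ^ (s - 1) then 1 else 0) +
        if (i : ℕ) < x.val % p ^ (s - 1) then 1 else 0 := by
  have hN : 0 < p ^ (s - 1) := pow_pos (NeZero.pos p) _
  have hlt : p ^ (s - 1) - x.val % p ^ (s - 1) < p ^ (s - 1) :=
    Nat.sub_lt hN (Nat.pos_of_ne_zero hr)
  have hneg := val_neg_eq_of_mod_ne_zero hr
  have hmod : (-x).val % p ^ (s - 1) = p ^ (s - 1) - x.val % p ^ (s - 1) := by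
    rw [hneg, Nat.add_mul_mod_self_right, Nat.mod_eq_of_lt hlt]
  have hdiv : (-x).val / p ^ (s - 1) = p - 1 - x.val / p ^ (s - 1) := by
    rw [hneg, Nat.add_mul_div_right _ _ hN, Nat.div_eq_of_lt hlt, zero_add]
  have hcast : ((p - 1 - x.val / p ^ (s - 1) : ℕ) : ZMod p) +
      ((x.val / p ^ (s - 1) : ℕ) : ZMod p) = -1 := by
    have := val_div_pow_lt x
    rw [← Nat.cast_add, Nat.sub_add_cancel (by omega), Nat.cast_pred (NeZero.pos p),
      ZMod.natCast_self, zero_sub]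
  rw [gray_apply, gray_apply, hmod, hdiv]
  linear_combination hcast

theorem pow_dvd_mul_val_of_gray_neg_add_gray_mem_range (hp : p.Prime) {x : ZMod (p ^ s)}
    (h : gray p s (-x) + gray p s x ∈ Set.range (gray p s)) :
    p ^ (s - 1) ∣ p * x.val := by
  have := Fact.mk hp
  set N := p ^ (s - 1)
  set r := x.val % N
  obtain hr0 | hr0 := Nat.eq_zero_or_pos r
  · exact dvd_mul_of_dvd_right (Nat.dvd_of_mod_eq_zero hr0) p
  obtain ⟨y, hy⟩ := h
  have hrN : r < N := Nat.mod_lt _ (pow_pos hp.pos _)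
  have htN : y.val % N < N := Nat.mod_lt _ (pow_pos hp.pos _)
  have E (i : ℕ) (hi : i < N) :
      -1 + (if i < N - r then 1 else 0) + (if i < r then 1 else 0) =
        ((y.val / N : ℕ) : ZMod p) + if i < y.val % N then 1 else 0 := by
    rw [← gray_neg_add_gray_apply hr0.ne' ⟨i, hi⟩, ← Pi.add_apply, ← hy, gray_apply]
  have hc : ((y.val / N : ℕ) : ZMod p) = -1 := by
    simpa [show ¬ N - 1 < N - r by omega, show ¬ N - 1 < r by omega,
      show ¬ N - 1 < y.val % N by omega] using (E (N - 1) (by omega)).symm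
  have ht : y.val % N = 0 ∧ (2 : ZMod p) = 0 := by
    have h0 := E 0 (by omega)
    simp only [hc, if_pos (show 0 < N - r by omega), if_pos hr0] at h0
    split_ifs at h0 with ht
    · exact absurd (by linear_combination h0) (one_ne_zero (α := ZMod p))
    · exact ⟨by omega, by linear_combination h0⟩
  have hr : N - r = r := by
    by_contra hne
    obtain hlt | hlt := Nat.lt_or_gt_of_ne hne
    · simpa [hc, ht.1, hlt, show ¬ N - r < N - r from lt_irrefl _] using E (N - r) (by omega)
    · simpa [hc, ht.1, hlt, show ¬ r < r from lt_irrefl _] using E r hrN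
  have hp2 : p = 2 := by
    have h2 : ((2 : ℕ) : ZMod p) = 0 := by exact_mod_cast ht.2
    exact (Nat.prime_dvd_prime_iff_eq hp Nat.prime_two).mp ((ZMod.natCast_eq_zero_iff 2 p).mp h2)
  have hpr : p * r = N := by rw [hp2]; omega
  rw [← Nat.div_add_mod x.val N, mul_add, hpr]
  exact dvd_add (dvd_mul_of_dvd_right (dvd_mul_right _ _) _) dvd_rfl

theorem sq_nsmul_eq_zero_of_gray_neg_add_gray_mem_range (hp : p.Prime) {x : ZMod (p ^ s)}
    (h : gray p s (-x) + gray p s x ∈ Set.range (gray p s)) : p ^ 2 • x = 0 := by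
  have := Fact.mk hp
  rw [nsmul_eq_mul, ← ZMod.natCast_zmod_val x, ← Nat.cast_mul,
    ZMod.natCast_eq_zero_iff]
  calc p ^ s ∣ p * p ^ (s - 1) := by rw [← pow_succ']; exact pow_dvd_pow p (by omega)
    _ ∣ p * (p * x.val) := mul_dvd_mul_left p (pow_dvd_mul_val_of_gray_neg_add_gray_mem_range hp h)
    _ = p ^ 2 * x.val := by ring

end GrayMap

theorem grayV_not_mem_kernel_of_order_gt_general (p s n : ℕ) (hp : p.Prime)
    (C : Submodule (ZMod (p ^ s)) (Fin n → ZMod (p ^ s)))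
    (v : Fin n → ZMod (p ^ s)) (hv : v ∈ C) (hord : p ^ 2 < addOrderOf v) :
    (fun z => grayV p s n v + z) '' (grayV p s n '' C) ≠ grayV p s n '' C ∨
    (fun z => grayV p s n (-v) + z) '' (grayV p s n '' C) ≠ grayV p s n '' C := by
  right
  intro hker
  obtain ⟨u, -, hu⟩ : grayV p s n (-v) + grayV p s n v ∈ grayV p s n '' C :=
    hker ▸ ⟨_, ⟨v, hv, rfl⟩, rfl⟩
  have hsmul : p ^ 2 • v = 0 :=
    funext fun i => sq_nsmul_eq_zero_of_gray_neg_add_gray_mem_range hp ⟨u i, congrFun hu i⟩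
  exact hord.not_ge (Nat.le_of_dvd (pow_pos hp.pos 2) (addOrderOf_dvd_of_nsmul_eq_zero hsmul))

/-- If `v ∈ C` has additive order greater than `p^2`, then `φ_L(v)` does not lie
in the kernel of the Gray image: either `φ_L(v) + φ_L(C) ≠ φ_L(C)` or
`φ_L(-v) + φ_L(C) ≠ φ_L(C)`. -/
theorem grayV_not_mem_kernel_of_order_gt (p s n : ℕ) (hp : p.Prime) (hs : 3 ≤ s)
    (C : Submodule (ZMod (p ^ s)) (Fin n → ZMod (p ^ s)))
    (v : Fin n → ZMod (p ^ s)) (hv : v ∈ C) (hord : p ^ 2 < addOrderOf v) :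
    (fun z => grayV p s n v + z) '' (grayV p s n '' C) ≠ grayV p s n '' C ∨
    (fun z => grayV p s n (-v) + z) '' (grayV p s n '' C) ≠ grayV p s n '' C :=
  grayV_not_mem_kernel_of_order_gt_general p s n hp C v hv hord
end
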